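/- The two-sided Thue–Morse point is Morse-type minimal in the two-sided shift: let M* : ℤ → Bool be defined by M* n = t n for n ≥ 0 and M* n = t (−n − 1) for n < 0. Then the orbit closure closure {S^k M* | k : ℤ} ⊆ (ℤ → Bool) under the two-sided shift S, (S x) n = x (n+1), is minimal (every nonempty closed S-invariant subset of it equals it) and uncountable. -/

import Mathlib

/-- The Thue–Morse sequence: `t n = true` iff the number of 1s in the
binary expansion of `n` is odd. -/
def thueMorse (n : ℕ) : Bool := (Nat.digits 2 n).count 1 % 2 == 1

/-- The two-sided Thue–Morse point `M*`: `M* n = t n` for `n ≥ 0` and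
`M* n = t (−n − 1)` for `n < 0`. -/
def twoSidedMorse (n : ℤ) : Bool :=
  if 0 ≤ n then thueMorse n.toNat else thueMorse (-n - 1).toNat

/-- The two-sided shift map. -/
def shiftZ (x : ℤ → Bool) : ℤ → Bool := fun n => x (n + 1)

/-!
From `t (2n) = t n` and `t (2n+1) = !t n` one gets `t (2^k a + i) = t a xor t i` for `i < 2^k`:
a block of `t` of length `2^(k+1)` starting at a multiple of `2^k` is determined by two
consecutive values of `t`, and every pair of values occurs in every window of length 13. Hence
`t` is uniformly recurrent. So is `M*`, whose restriction to `[-4^e, 4^e)` is the block of `t` on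
`[5·4^e, 7·4^e)` (`t` restricted to `[0, 4^e)` is a palindrome). The orbit closure of a uniformly
recurrent point is minimal. An odd period `2q+1` of `t` would give `t (4q+1) = t (2q)` and an even
one halves, so `t` has no period; hence the orbit closure has no isolated point, and a compact set
without isolated points is uncountable by Baire's theorem.
-/

open Filter Topology Set Function

theorem Perfect.not_countable {X : Type*} [TopologicalSpace X] [CompactSpace X] [T2Space X]
    {C : Set X} (hC : Perfect C) (hne : C.Nonempty) : ¬ C.Countable := by
  intro hcount
  have : CompactSpace C := isCompact_iff_compactSpace.mp hC.closed.isCompact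
  have : Countable C := hcount.to_subtype
  have : Nonempty C := hne.to_subtype
  have hdense (c : C) : Dense ({c}ᶜ : Set C) := by
    rw [dense_compl_singleton_iff_not_open, isOpen_induced_iff]
    rintro ⟨U, hU, hUc⟩
    have hcU : (c : X) ∈ U := show c ∈ Subtype.val ⁻¹' U by simp [hUc]
    obtain ⟨z, ⟨hzU, hzC⟩, hzc⟩ := preperfect_iff_nhds.mp hC.acc c c.2 U (hU.mem_nhds hcU)
    have : (⟨z, hzC⟩ : C) ∈ Subtype.val ⁻¹' U := hzU
    exact hzc (congrArg Subtype.val (hUc ▸ this : (⟨z, hzC⟩ : C) ∈ ({c} : Set C)))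
  obtain ⟨c, hc⟩ :=
    (dense_iInter_of_isOpen (fun c : C => isOpen_compl_singleton) hdense).nonempty
  exact mem_iInter.mp hc c rfl

section SymbolicDynamics

variable {α : Type*}

def centralCylinder (y : ℤ → α) (L : ℕ) : Set (ℤ → α) :=
  {z | ∀ n : ℤ, n.natAbs ≤ L → z n = y n}

def shiftOrbit (x : ℤ → α) : Set (ℤ → α) :=
  {y | ∃ k : ℤ, (fun n => x (n + k)) = y}

def IsUniformlyRecurrent (x : ℤ → α) : Prop :=
  ∀ L : ℕ, ∃ g : ℕ, ∀ a q : ℤ, ∃ r, q ≤ r ∧ r ≤ q + g ∧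
    ∀ i : ℕ, i < L → x (r + i) = x (a + i)

lemma iterate_shift_apply (y : ℤ → α) (m : ℕ) :
    (fun (z : ℤ → α) n => z (n + 1))^[m] y = fun n => y (n + m) := by
  induction m with
  | zero => simp
  | succ m ih =>
    rw [iterate_succ_apply', ih]
    funext n
    push_cast
    ring_nf

variable [TopologicalSpace α] [DiscreteTopology α] {x y : ℤ → α}

lemma nhds_hasBasis_centralCylinder (y : ℤ → α) :
    (𝓝 y).HasBasis (fun _ => True) (centralCylinder y) := by
  have hpure : 𝓝 y = Filter.pi fun n => pure (y n) := by
    simp only [nhds_pi, nhds_discrete]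
  rw [hpure]
  refine (Filter.hasBasis_pi_pure y).to_hasBasis (fun I hI => ?_) (fun L _ => ?_)
  · refine ⟨hI.toFinset.sup Int.natAbs, trivial, fun z hz n hn => hz n ?_⟩
    exact Finset.le_sup (f := Int.natAbs) (hI.mem_toFinset.mpr hn)
  · refine ⟨Icc (-(L : ℤ)) L, finite_Icc _ _, fun z hz n hn => hz n ?_⟩
    simp only [mem_Icc]
    omega

lemma mem_closure_iff_centralCylinder {A : Set (ℤ → α)} :
    y ∈ closure A ↔ ∀ L : ℕ, ∃ z ∈ A, z ∈ centralCylinder y L := by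
  simpa using mem_closure_iff_nhds_basis (nhds_hasBasis_centralCylinder y)

theorem IsUniformlyRecurrent.shiftOrbit_subset_closure (hx : IsUniformlyRecurrent x)
    (hy : y ∈ closure (shiftOrbit x)) :
    shiftOrbit x ⊆ closure (range fun m : ℕ => fun n => y (n + m)) := by
  rintro _ ⟨k, rfl⟩
  refine mem_closure_iff_centralCylinder.mpr fun L => ?_
  obtain ⟨g, hg⟩ := hx (2 * L + 1)
  obtain ⟨_, ⟨j, rfl⟩, hj⟩ := mem_closure_iff_centralCylinder.mp hy (L + g)
  obtain ⟨r, hjr, hrg, hr⟩ := hg (k - L) (j - L)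
  obtain ⟨m, hm⟩ : ∃ m : ℕ, (m : ℤ) = r + L - j := ⟨(r + L - j).toNat, by omega⟩
  refine ⟨_, ⟨m, rfl⟩, fun n hn => ?_⟩
  obtain ⟨i, hi⟩ : ∃ i : ℕ, (i : ℤ) = n + L := ⟨(n + L).toNat, by omega⟩
  calc y (n + m) = x (n + m + j) := (hj (n + m) (by omega)).symm
    _ = x (r + i) := by congr 1; omega
    _ = x (k - L + i) := hr i (by omega)
    _ = x (n + k) := by congr 1; omega

theorem IsUniformlyRecurrent.eq_closure_shiftOrbit (hx : IsUniformlyRecurrent x)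
    {K : Set (ℤ → α)} (hKX : K ⊆ closure (shiftOrbit x)) (hne : K.Nonempty)
    (hcl : IsClosed K) (hinv : MapsTo (fun (z : ℤ → α) n => z (n + 1)) K K) :
    K = closure (shiftOrbit x) := by
  obtain ⟨y, hy⟩ := hne
  have hforward : (range fun m : ℕ => fun n => y (n + m)) ⊆ K := by
    rintro _ ⟨m, rfl⟩
    simpa only [iterate_shift_apply] using hinv.iterate m hy
  exact hKX.antisymm (closure_minimal
    ((hx.shiftOrbit_subset_closure (hKX hy)).trans (closure_minimal hforward hcl)) hcl)

theorem IsUniformlyRecurrent.preperfect_shiftOrbit (hx : IsUniformlyRecurrent x)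
    (hper : ∀ p : ℤ, p ≠ 0 → ¬ Periodic x p) : Preperfect (shiftOrbit x) := by
  rw [preperfect_iff_nhds]
  rintro _ ⟨k, rfl⟩ U hU
  obtain ⟨L, -, hLU⟩ := (nhds_hasBasis_centralCylinder _).mem_iff.mp hU
  obtain ⟨g, hg⟩ := hx (2 * L + 1)
  obtain ⟨r, hr1, -, hr⟩ := hg (k - L) (k - L + 1)
  refine ⟨fun n => x (n + (r + L)), ⟨hLU fun n hn => ?_, r + L, rfl⟩, fun heq => ?_⟩
  · obtain ⟨i, hi⟩ : ∃ i : ℕ, (i : ℤ) = n + L := ⟨(n + L).toNat, by omega⟩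
    calc x (n + (r + L)) = x (r + i) := by congr 1; omega
      _ = x (k - L + i) := hr i (by omega)
      _ = x (n + k) := by congr 1; omega
  · refine hper (r + L - k) (by omega) fun n => ?_
    have hn := congrFun heq (n - k)
    simp only [sub_add_cancel] at hn
    rwa [show n - k + (r + L) = n + (r + L - k) by ring] at hn

end SymbolicDynamics

@[simp]
lemma thueMorse_zero : thueMorse 0 = false := rfl

lemma thueMorse_two_mul (n : ℕ) : thueMorse (2 * n) = thueMorse n := by
  rcases Nat.eq_zero_or_pos n with rfl | hn
  · rfl
  · rw [thueMorse, Nat.digits_def' (by norm_num) (by omega), Nat.mul_mod_right,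
      Nat.mul_div_cancel_left _ two_pos]
    simp [thueMorse]

lemma thueMorse_two_mul_add_one (n : ℕ) : thueMorse (2 * n + 1) = !thueMorse n := by
  rw [thueMorse, Nat.digits_def' (by norm_num) (by omega), Nat.mul_add_mod_self_left,
    show (2 * n + 1) / 2 = n by omega, List.count_cons_self, thueMorse]
  rcases Nat.mod_two_eq_zero_or_one ((Nat.digits 2 n).count 1) with h | h <;>
    simp [Nat.add_mod, h]

lemma thueMorse_two_pow_mul_add (k : ℕ) {a i : ℕ} (hi : i < 2 ^ k) :
    thueMorse (2 ^ k * a + i) = xor (thueMorse a) (thueMorse i) := by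
  induction k generalizing a i with
  | zero => simp_all
  | succ k ih =>
    obtain ⟨j, rfl | rfl⟩ := Nat.even_or_odd' i
    · rw [show 2 ^ (k + 1) * a + 2 * j = 2 * (2 ^ k * a + j) by ring, thueMorse_two_mul,
        thueMorse_two_mul, ih (by omega)]
    · rw [show 2 ^ (k + 1) * a + (2 * j + 1) = 2 * (2 ^ k * a + j) + 1 by ring,
        thueMorse_two_mul_add_one, thueMorse_two_mul_add_one, ih (by omega), Bool.xor_not]

lemma thueMorse_pow_four_sub_one_sub (e : ℕ) {x : ℕ} (hx : x < 4 ^ e) :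
    thueMorse (4 ^ e - 1 - x) = thueMorse x := by
  induction e generalizing x with
  | zero => simp_all
  | succ e ih =>
    obtain ⟨j, s, hs, rfl⟩ : ∃ j s, s < 4 ∧ x = 4 * j + s :=
      ⟨x / 4, x % 4, by omega, by omega⟩
    have hj : j < 4 ^ e := by rw [pow_succ] at hx; omega
    have hsplit : 4 ^ (e + 1) - 1 - (4 * j + s) = 2 ^ 2 * (4 ^ e - 1 - j) + (3 - s) := by
      rw [pow_succ]; omega
    rw [hsplit, thueMorse_two_pow_mul_add 2 (by omega), ih hj,
      show 4 * j + s = 2 ^ 2 * j + s by norm_num, thueMorse_two_pow_mul_add 2 (by omega)]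
    interval_cases s <;> rfl

lemma thueMorse_six_mul_pow_four_add (e : ℕ) {x : ℕ} (hx : x < 4 ^ e) :
    thueMorse (6 * 4 ^ e + x) = thueMorse x := by
  have hpow : 2 ^ (2 * e) = 4 ^ e := by rw [pow_mul]; rfl
  rw [show 6 * 4 ^ e = 2 ^ (2 * e) * 6 by rw [hpow]; ring,
    thueMorse_two_pow_mul_add _ (by rwa [hpow]), show thueMorse 6 = false by decide,
    Bool.false_xor]

lemma thueMorse_six_mul_pow_four_sub_one_sub (e : ℕ) {x : ℕ} (hx : x < 4 ^ e) :
    thueMorse (6 * 4 ^ e - 1 - x) = thueMorse x := by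
  have hpow : 2 ^ (2 * e) = 4 ^ e := by rw [pow_mul]; rfl
  rw [show 6 * 4 ^ e - 1 - x = 2 ^ (2 * e) * 5 + (4 ^ e - 1 - x) by rw [hpow]; omega,
    thueMorse_two_pow_mul_add _ (by rw [hpow]; omega), thueMorse_pow_four_sub_one_sub e hx,
    show thueMorse 5 = false by decide, Bool.false_xor]

lemma thueMorse_not_periodic {p : ℕ} (hp : p ≠ 0) : ¬ Periodic thueMorse p := by
  induction p using Nat.strong_induction_on with
  | _ p ih =>
    intro hper
    obtain ⟨q, rfl | rfl⟩ := Nat.even_or_odd' p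
    · refine ih q (by omega) (by omega) fun n => ?_
      rw [← thueMorse_two_mul, mul_add, hper, thueMorse_two_mul]
    · have h := hper (2 * q)
      rw [show 2 * q + (2 * q + 1) = 2 * (2 * q) + 1 by ring, thueMorse_two_mul_add_one] at h
      exact Bool.not_ne_self _ h

lemma exists_thueMorse_eq (m : ℕ) (a : Bool) :
    ∃ j, m ≤ j ∧ j ≤ m + 2 ∧ thueMorse j = a := by
  by_cases hu : thueMorse ((m + 1) / 2) = a
  · exact ⟨2 * ((m + 1) / 2), by omega, by omega, by rw [thueMorse_two_mul, hu]⟩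
  · refine ⟨2 * ((m + 1) / 2) + 1, by omega, by omega, ?_⟩
    rw [thueMorse_two_mul_add_one]
    cases a <;> simpa using hu

lemma exists_thueMorse_eq_and_succ_eq_not (m : ℕ) (a : Bool) :
    ∃ j, m ≤ j ∧ j ≤ m + 5 ∧ thueMorse j = a ∧ thueMorse (j + 1) = !a := by
  obtain ⟨u, hmu, hum, hu⟩ := exists_thueMorse_eq ((m + 1) / 2) a
  exact ⟨2 * u, by omega, by omega, by rw [thueMorse_two_mul, hu],
    by rw [thueMorse_two_mul_add_one, hu]⟩

lemma exists_thueMorse_eq_and_succ_eq (m : ℕ) (a b : Bool) :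
    ∃ j, m ≤ j ∧ j ≤ m + 11 ∧ thueMorse j = a ∧ thueMorse (j + 1) = b := by
  by_cases hb : b = !a
  · obtain ⟨j, hmj, hjm, hj⟩ := exists_thueMorse_eq_and_succ_eq_not m a
    exact ⟨j, hmj, by omega, hb ▸ hj⟩
  · -- an equal pair `a a` sits at `2v + 1` above a pair `!a a` at `v`
    obtain ⟨v, hmv, hvm, hv, hv'⟩ := exists_thueMorse_eq_and_succ_eq_not (m / 2) (!a)
    refine ⟨2 * v + 1, by omega, by omega, ?_, ?_⟩
    · rw [thueMorse_two_mul_add_one, hv, Bool.not_not]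
    · rw [show 2 * v + 1 + 1 = 2 * (v + 1) by ring, thueMorse_two_mul, hv', Bool.not_not]
      cases a <;> cases b <;> simp_all

lemma thueMorse_two_pow_mul_add_congr {k a b s : ℕ} (h₀ : thueMorse a = thueMorse b)
    (h₁ : thueMorse (a + 1) = thueMorse (b + 1)) (hs : s < 2 * 2 ^ k) :
    thueMorse (2 ^ k * a + s) = thueMorse (2 ^ k * b + s) := by
  by_cases hsk : s < 2 ^ k
  · rw [thueMorse_two_pow_mul_add k hsk, thueMorse_two_pow_mul_add k hsk, h₀]
  · obtain ⟨s', rfl⟩ : ∃ s', s = 2 ^ k + s' := ⟨s - 2 ^ k, by omega⟩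
    rw [← add_assoc, ← add_assoc, ← mul_add_one, ← mul_add_one,
      thueMorse_two_pow_mul_add k (by omega), thueMorse_two_pow_mul_add k (by omega), h₁]

lemma thueMorse_uniformlyRecurrent (L : ℕ) :
    ∃ g, ∀ p q : ℕ, ∃ r, q ≤ r ∧ r ≤ q + g ∧
      ∀ i < L, thueMorse (r + i) = thueMorse (p + i) := by
  obtain ⟨N, hN, hLN⟩ : ∃ N, N = 2 ^ L ∧ L < N := ⟨_, rfl, Nat.lt_two_pow_self⟩
  refine ⟨13 * N, fun p q => ?_⟩
  obtain ⟨b, hqb, hbq, hb, hb'⟩ :=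
    exists_thueMorse_eq_and_succ_eq (q / N + 1) (thueMorse (p / N)) (thueMorse (p / N + 1))
  have hq : q < N * (q / N + 1) := Nat.lt_mul_div_succ q (by omega)
  have hp : N * (p / N) + p % N = p := Nat.div_add_mod p N
  have hpN : p % N < N := Nat.mod_lt p (by omega)
  refine ⟨N * b + p % N, ?_, ?_, fun i hi => ?_⟩
  · have := Nat.mul_le_mul_left N hqb
    omega
  · nlinarith [Nat.mul_le_mul_left N hbq, Nat.mul_div_le q N]
  · subst hN
    rw [add_assoc, thueMorse_two_pow_mul_add_congr hb hb' (by omega), ← add_assoc, hp]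

@[simp]
lemma twoSidedMorse_natCast (n : ℕ) : twoSidedMorse n = thueMorse n := by
  simp [twoSidedMorse]

lemma twoSidedMorse_neg_natCast_sub_one (n : ℕ) : twoSidedMorse (-n - 1) = thueMorse n := by
  rw [twoSidedMorse, if_neg (by omega), show -(-(n : ℤ) - 1) - 1 = n by ring, Int.toNat_natCast]

lemma exists_twoSidedMorse_add_eq_thueMorse_add (a : ℤ) (L : ℕ) :
    ∃ k : ℕ, ∀ i < L, twoSidedMorse (a + i) = thueMorse (k + i) := by
  -- `M*` agrees on `[-4^e, 4^e)` with `t` on `[5 * 4^e, 7 * 4^e)`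
  set N := 4 ^ (a.natAbs + L)
  have hN : a.natAbs + L < N := Nat.lt_pow_self (by norm_num)
  refine ⟨(a + 6 * N).toNat, fun i hi => ?_⟩
  rcases le_or_gt 0 (a + i) with hai | hai
  · obtain ⟨j, hj⟩ : ∃ j : ℕ, (j : ℤ) = a + i := ⟨(a + i).toNat, by omega⟩
    rw [← hj, twoSidedMorse_natCast, show (a + 6 * N).toNat + i = 6 * N + j by omega,
      thueMorse_six_mul_pow_four_add _ (by omega)]
  · obtain ⟨j, hj⟩ : ∃ j : ℕ, -(j : ℤ) - 1 = a + i :=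
      ⟨(-(a + i) - 1).toNat, by omega⟩
    rw [← hj, twoSidedMorse_neg_natCast_sub_one,
      show (a + 6 * N).toNat + i = 6 * N - 1 - j by omega,
      thueMorse_six_mul_pow_four_sub_one_sub _ (by omega)]

lemma twoSidedMorse_isUniformlyRecurrent : IsUniformlyRecurrent twoSidedMorse := by
  intro L
  obtain ⟨g, hg⟩ := thueMorse_uniformlyRecurrent L
  refine ⟨g, fun a q => ?_⟩
  obtain ⟨p, hp⟩ := exists_twoSidedMorse_add_eq_thueMorse_add a L
  obtain ⟨k, hk⟩ := exists_twoSidedMorse_add_eq_thueMorse_add q (g + L)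
  obtain ⟨r, hkr, hrk, hr⟩ := hg p k
  refine ⟨q + (r - k : ℕ), by omega, by omega, fun i hi => ?_⟩
  calc twoSidedMorse (q + (r - k : ℕ) + i) = twoSidedMorse (q + (r - k + i : ℕ)) := by
        push_cast; ring_nf
    _ = thueMorse (k + (r - k + i)) := hk _ (by omega)
    _ = thueMorse (p + i) := by rw [← hr i hi]; congr 1; omega
    _ = twoSidedMorse (a + i) := (hp i hi).symm

lemma twoSidedMorse_not_periodic {p : ℤ} (hp : p ≠ 0) : ¬ Periodic twoSidedMorse p := by
  wlog hpos : 0 < p generalizing p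
  · exact fun h => this (neg_ne_zero.mpr hp) (by omega) h.neg
  obtain ⟨m, rfl⟩ : ∃ m : ℕ, (m : ℤ) = p := ⟨p.toNat, by omega⟩
  refine fun h => thueMorse_not_periodic (by omega : m ≠ 0) fun n => ?_
  have := h n
  rwa [← Nat.cast_add, twoSidedMorse_natCast, twoSidedMorse_natCast] at this

/-- The two-sided Thue–Morse point is a Morse-type minimal point in the
two-sided binary shift: its orbit closure (over all integer shifts) is
minimal and uncountable. -/
theorem twoSidedMorse_morseTypeMinimal :
    (∀ K : Set (ℤ → Bool),
        K ⊆ closure {y : ℤ → Bool | ∃ k : ℤ, (fun n => twoSidedMorse (n + k)) = y} →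
        K.Nonempty → IsClosed K → shiftZ '' K ⊆ K →
        K = closure {y : ℤ → Bool | ∃ k : ℤ, (fun n => twoSidedMorse (n + k)) = y}) ∧
    ¬ (closure {y : ℤ → Bool | ∃ k : ℤ, (fun n => twoSidedMorse (n + k)) = y}).Countable := by
  have hrec := twoSidedMorse_isUniformlyRecurrent
  refine ⟨fun K hKX hne hcl hinv =>
    hrec.eq_closure_shiftOrbit hKX hne hcl (mapsTo_iff_image_subset.mpr hinv), ?_⟩
  have hperf : Perfect (closure (shiftOrbit twoSidedMorse)) :=
    (hrec.preperfect_shiftOrbit fun _ hp => twoSidedMorse_not_periodic hp).perfect_closure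
  exact hperf.not_countable ⟨twoSidedMorse, subset_closure ⟨0, by simp⟩⟩
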